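/- Let 1 < p ≤ θ. Then L(p+1) = −(p+1)²(5pθ + θ + p + 1)(3pθ − θ − p − 1)/(θ+1)², and consequently L(p+1) < 0. -/
import Mathlib


noncomputable section

/-- The quartic polynomial `L`. -/
def Lpoly (p θ s : ℝ) : ℝ :=
  s ^ 4 - (16 * p * θ * (p + 1) / (θ + 1)) * s ^ 2
    + (16 * p * θ * (p + 1) * (p + θ + 2) / (θ + 1) ^ 2) * s
    - 16 * p * θ * (p + 1) ^ 2 / (θ + 1) ^ 2

/-- value of `L(p+1)` and `L(p+1) < 0`. -/
theorem stmt11 (p θ : ℝ) (hp : 1 < p) (hpθ : p ≤ θ) :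
    Lpoly p θ (p + 1) =
      -((p + 1) ^ 2 * (5 * p * θ + θ + p + 1) * (3 * p * θ - θ - p - 1)) / (θ + 1) ^ 2 ∧
    Lpoly p θ (p + 1) < 0 := by
  have hθ : (1:ℝ) < θ := lt_of_lt_of_le hp hpθ
  have hθ1 : (θ + 1) ≠ 0 := by linarith
  have heq : Lpoly p θ (p + 1) =
      -((p + 1) ^ 2 * (5 * p * θ + θ + p + 1) * (3 * p * θ - θ - p - 1)) / (θ + 1) ^ 2 := by
    unfold Lpoly
    field_simp
    ring
  refine ⟨heq, ?_⟩
  rw [heq]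
  have h1 : (0:ℝ) < (p + 1) ^ 2 * (5 * p * θ + θ + p + 1) * (3 * p * θ - θ - p - 1) := by
    have : (0:ℝ) < 3 * p * θ - θ - p - 1 := by nlinarith
    positivity
  have h2 : (0:ℝ) < (θ + 1) ^ 2 := by positivity
  exact div_neg_of_neg_of_pos (neg_neg_of_pos h1) h2
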